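/- Let d ≥ 1 and n ≥ 1 be natural numbers and let A, B be d×d complex matrices. Then det(I_{nd} + 𝟙_n ⊗ A + I_n ⊗ B) = det(I_d + n•A + B) · (det(I_d + B))^(n−1), where ⊗ denotes the Kronecker product, 𝟙_n the n×n all-ones matrix, and I_n, I_d, I_{nd} identity matrices of the indicated sizes. -/

import Mathlib

/-!
In the basis `𝟙, e₁, …, e_{n-1}` of `ℂⁿ` the all-ones matrix becomes upper triangular with
diagonal `(n, 0, …, 0)`. Conjugating by this change of basis tensored with `I_d` turns
`I + 𝟙_n ⊗ A + I_n ⊗ B = 𝟙_n ⊗ A + I_n ⊗ (I + B)` into a block upper triangular matrix whose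
diagonal blocks are `I + nA + B` once and `I + B` for the remaining `n - 1` times.
-/

open Matrix Kronecker

def onesMatC (n : ℕ) : Matrix (Fin n) (Fin n) ℂ := Matrix.of fun _ _ => 1

namespace Matrix

variable {ι κ R : Type*}

theorem IsUpperTriangular.blockTriangular_kronecker [LinearOrder ι] [MulZeroClass R]
    {T : Matrix ι ι R} (hT : T.IsUpperTriangular) (A : Matrix κ κ R) :
    (T ⊗ₖ A).BlockTriangular Prod.fst := fun p q h => by
  simp [kroneckerMap_apply, hT h]

variable [Fintype ι] [Fintype κ] [DecidableEq ι] [DecidableEq κ] [CommRing R]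

theorem BlockTriangular.det_prod_fst [LinearOrder ι] {N : Matrix (ι × κ) (ι × κ) R}
    (hN : N.BlockTriangular Prod.fst) :
    N.det = ∏ i, (N.submatrix (Prod.mk i) (Prod.mk i)).det := by
  rw [hN.det_fintype]
  refine Finset.prod_congr rfl fun i _ => ?_
  let e : {p : ι × κ // p.1 = i} ≃ κ :=
    { toFun := fun p => p.1.2
      invFun := fun k => ⟨(i, k), rfl⟩
      left_inv := by rintro ⟨⟨a, k⟩, rfl⟩; rfl
      right_inv := fun _ => rfl }
  rw [← det_submatrix_equiv_self e.symm]
  rfl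

theorem det_kronecker_add_kronecker_of_isUpperTriangular [LinearOrder ι] {T S : Matrix ι ι R}
    (hT : T.IsUpperTriangular) (hS : S.IsUpperTriangular) (A B : Matrix κ κ R) :
    (T ⊗ₖ A + S ⊗ₖ B).det = ∏ i, (T i i • A + S i i • B).det := by
  rw [((hT.blockTriangular_kronecker A).add (hS.blockTriangular_kronecker B)).det_prod_fst]
  congr! 2

theorem det_kronecker_add_one_kronecker_eq_of_mul_eq_mul {X Y P : Matrix ι ι R}
    (hP : IsUnit P.det) (h : X * P = P * Y) (A M : Matrix κ κ R) :
    (X ⊗ₖ A + 1 ⊗ₖ M).det = (Y ⊗ₖ A + 1 ⊗ₖ M).det := by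
  have hconj : (X ⊗ₖ A + 1 ⊗ₖ M) * (P ⊗ₖ 1) = (P ⊗ₖ 1) * (Y ⊗ₖ A + 1 ⊗ₖ M) := by
    simp only [add_mul, mul_add, ← mul_kronecker_mul, h, one_mul, mul_one]
  have hdet : IsUnit (P ⊗ₖ (1 : Matrix κ κ R)).det := by
    simpa [det_kronecker] using hP.pow (Fintype.card κ)
  have := congrArg det hconj
  rw [det_mul, det_mul, mul_comm] at this
  exact hdet.mul_left_cancel this

end Matrix

section OnesMatrix

variable (R : Type*) [CommRing R] (n : ℕ)

/-- Columns `𝟙, e₁, …, eₙ`. -/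
def onesBasisChange : Matrix (Fin (n + 1)) (Fin (n + 1)) R :=
  Matrix.of fun i j => if j = 0 ∨ i = j then 1 else 0

def onesTriangular : Matrix (Fin (n + 1)) (Fin (n + 1)) R :=
  Matrix.of fun i j => if i = 0 then (if j = 0 then ((n + 1 : ℕ) : R) else 1) else 0

theorem det_onesBasisChange : (onesBasisChange R n).det = 1 := by
  rw [det_of_isLowerTriangular]
  · simp [onesBasisChange]
  · intro i j (hij : i < j)
    simp [onesBasisChange, ((Fin.zero_le i).trans_lt hij).ne', hij.ne]

theorem isUpperTriangular_onesTriangular : (onesTriangular R n).IsUpperTriangular := by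
  intro i j (hij : j < i)
  simp [onesTriangular, ((Fin.zero_le j).trans_lt hij).ne']

theorem onesTriangular_zero_zero : onesTriangular R n 0 0 = ((n + 1 : ℕ) : R) := by
  simp [onesTriangular]

theorem onesTriangular_succ_succ (i : Fin n) : onesTriangular R n i.succ i.succ = 0 := by
  simp [onesTriangular]

theorem ones_mul_onesBasisChange :
    of (fun _ _ => (1 : R)) * onesBasisChange R n = onesBasisChange R n * onesTriangular R n := by
  ext i j
  by_cases hj : j = 0 <;> simp [mul_apply, onesBasisChange, onesTriangular, hj]

end OnesMatrix

theorem stmt_3_general (d n : ℕ) (hn : 1 ≤ n)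
    (A B : Matrix (Fin d) (Fin d) ℂ) :
    ((1 : Matrix (Fin n × Fin d) (Fin n × Fin d) ℂ) +
        onesMatC n ⊗ₖ A + (1 : Matrix (Fin n) (Fin n) ℂ) ⊗ₖ B).det
      = ((1 : Matrix (Fin d) (Fin d) ℂ) + n • A + B).det *
        ((1 : Matrix (Fin d) (Fin d) ℂ) + B).det ^ (n - 1) := by
  obtain ⟨m, rfl⟩ : ∃ m, n = m + 1 := ⟨n - 1, by omega⟩
  have hsplit : (1 : Matrix (Fin (m + 1) × Fin d) (Fin (m + 1) × Fin d) ℂ) +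
      onesMatC (m + 1) ⊗ₖ A + 1 ⊗ₖ B = onesMatC (m + 1) ⊗ₖ A + 1 ⊗ₖ (1 + B) := by
    rw [kronecker_add, one_kronecker_one]
    abel
  have hP : IsUnit (onesBasisChange ℂ m).det := by simp [det_onesBasisChange]
  rw [hsplit, onesMatC,
    det_kronecker_add_one_kronecker_eq_of_mul_eq_mul hP (ones_mul_onesBasisChange ℂ m),
    det_kronecker_add_kronecker_of_isUpperTriangular (isUpperTriangular_onesTriangular ℂ m)
      blockTriangular_one, Fin.prod_univ_succ]
  simp only [onesTriangular_zero_zero, onesTriangular_succ_succ, one_apply_eq,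
    Nat.cast_smul_eq_nsmul, one_smul, zero_smul, zero_add, Finset.prod_const, Finset.card_univ,
    Fintype.card_fin, Nat.add_sub_cancel]
  rw [add_right_comm, add_comm (_ • A)]

/-- Determinant factorization for replica-symmetric block matrices:
`det(I_{nd} + 𝟙_n ⊗ A + I_n ⊗ B) = det(I_d + n•A + B) · det(I_d + B)^(n−1)`. -/
theorem stmt_3 (d n : ℕ) (hd : 1 ≤ d) (hn : 1 ≤ n)
    (A B : Matrix (Fin d) (Fin d) ℂ) :
    ((1 : Matrix (Fin n × Fin d) (Fin n × Fin d) ℂ) +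
        onesMatC n ⊗ₖ A + (1 : Matrix (Fin n) (Fin n) ℂ) ⊗ₖ B).det
      = ((1 : Matrix (Fin d) (Fin d) ℂ) + n • A + B).det *
        ((1 : Matrix (Fin d) (Fin d) ℂ) + B).det ^ (n - 1) :=
  stmt_3_general d n hn A B
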